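/- Assume that neither α − β nor 2α + β + 2ζ is an integer. Then for all integers 0 ≤ m, n ≤ N the Racah-type rational function admits the dual Hahn expansion 𝒰_m(n; α, β, ζ, N) = [n! / (α−β−n)_n] · Σ_{k=0}^{n} (−α)_k (2α−β−n)_{n−k} / ((n−k)! k!) · R^{dH}_k(m; N−2α−β−2ζ−1, 2α−β−N−1, N). -/

import Mathlib

set_option maxHeartbeats 1000000


/-- The Pochhammer symbol `(a)_k = a(a+1)⋯(a+k−1)`. -/
noncomputable def poch (a : ℝ) (k : ℕ) : ℝ := ∏ i ∈ Finset.range k, (a + i)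

/-- The Racah-type rational function
`𝒰_m(n; a, b, c, N) = Σ_{k=0}^{min(m,n)} (−m)_k (−n)_k (−a)_k (m−2b−2c−1)_k /
  [(−N)_k (a−b−n)_k (N−2a−b−2c)_k k!]`. -/
noncomputable def racahRat (a b c : ℝ) (N m n : ℕ) : ℝ :=
  ∑ k ∈ Finset.range (min m n + 1),
    poch (-(m : ℝ)) k * poch (-(n : ℝ)) k * poch (-a) k
      * poch ((m : ℝ) - 2 * b - 2 * c - 1) k
      / (poch (-(N : ℝ)) k * poch (a - b - (n : ℝ)) k
          * poch ((N : ℝ) - 2 * a - b - 2 * c) k * (Nat.factorial k : ℝ))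

/-- The dual Hahn polynomial
`R^{dH}_k(x; a, b, N) = Σ_{j=0}^{k} (−k)_j (−x)_j (x+a+b+1)_j / [(a+1)_j (−N)_j j!]`. -/
noncomputable def dualHahn (a b : ℝ) (N k x : ℕ) : ℝ :=
  ∑ j ∈ Finset.range (k + 1),
    poch (-(k : ℝ)) j * poch (-(x : ℝ)) j * poch ((x : ℝ) + a + b + 1) j
      / (poch (a + 1) j * poch (-(N : ℝ)) j * (Nat.factorial j : ℝ))

lemma poch_zero (a : ℝ) : poch a 0 = 1 := Finset.prod_range_zero _

lemma poch_succ (a : ℝ) (k : ℕ) : poch a (k + 1) = poch a k * (a + k) :=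
  Finset.prod_range_succ _ _

lemma poch_add (a : ℝ) (j i : ℕ) : poch a (j + i) = poch a j * poch (a + j) i := by
  unfold poch
  rw [Finset.prod_range_add]
  congr 1
  refine Finset.prod_congr rfl fun k _ => ?_
  push_cast
  ring

lemma poch_ne_zero {a : ℝ} {k : ℕ} (h : ∀ i, i < k → a + i ≠ 0) : poch a k ≠ 0 := by
  unfold poch
  rw [Finset.prod_ne_zero_iff]
  exact fun i hi => h i (Finset.mem_range.mp hi)

lemma poch_nat_eq_zero {k j : ℕ} (h : k < j) : poch (-(k : ℝ)) j = 0 := by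
  unfold poch
  apply Finset.prod_eq_zero (Finset.mem_range.mpr h)
  simp

lemma poch_nat_mul {k j : ℕ} (h : j ≤ k) :
    poch (-(k : ℝ)) j * (Nat.factorial (k - j) : ℝ) = (-1) ^ j * (Nat.factorial k : ℝ) := by
  induction j with
  | zero => simp [poch_zero]
  | succ j ih =>
    have hj : j ≤ k := Nat.le_of_succ_le h
    have e1 : ((k - j).factorial : ℝ) = ((k : ℝ) - j) * ((k - (j + 1)).factorial : ℝ) := by
      rw [show k - j = (k - (j + 1)) + 1 from by omega, Nat.factorial_succ]
      push_cast [Nat.cast_sub h]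
      ring
    calc poch (-(k : ℝ)) (j + 1) * ((k - (j + 1)).factorial : ℝ)
        = -(poch (-(k : ℝ)) j * (((k : ℝ) - j) * ((k - (j + 1)).factorial : ℝ))) := by
          rw [poch_succ]; ring
      _ = -(poch (-(k : ℝ)) j * ((k - j).factorial : ℝ)) := by rw [e1]
      _ = -((-1) ^ j * (k.factorial : ℝ)) := by rw [ih hj]
      _ = (-1) ^ (j + 1) * (k.factorial : ℝ) := by ring

lemma poch_nat_eq {k j : ℕ} (h : j ≤ k) :
    poch (-(k : ℝ)) j = (-1) ^ j * (Nat.factorial k : ℝ) / (Nat.factorial (k - j) : ℝ) := by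
  have hf : ((k - j).factorial : ℝ) ≠ 0 := Nat.cast_ne_zero.mpr (Nat.factorial_ne_zero _)
  field_simp
  exact poch_nat_mul h

lemma poch_vandermonde (x y : ℝ) (M : ℕ) :
    poch (x + y) M
      = ∑ i ∈ Finset.range (M + 1), (M.choose i : ℝ) * (poch x i * poch y (M - i)) := by
  induction M with
  | zero => simp [poch_zero]
  | succ M ih =>
    set A := ∑ i ∈ Finset.range (M + 1),
        (M.choose i : ℝ) * (poch x i * poch y (M + 1 - i)) with hAdef
    set B := ∑ i ∈ Finset.range (M + 1),
        (M.choose i : ℝ) * (poch x (i + 1) * poch y (M - i)) with hBdef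
    have hA : ∑ i ∈ Finset.range (M + 2),
          ((M + 1).choose i : ℝ) * (poch x i * poch y (M + 1 - i)) = B + A := by
      rw [Finset.sum_range_succ' _ (M + 1)]
      have hsplit : ∀ i ∈ Finset.range (M + 1),
          (((M + 1).choose (i + 1) : ℝ)) * (poch x (i + 1) * poch y (M + 1 - (i + 1)))
            = (M.choose i : ℝ) * (poch x (i + 1) * poch y (M - i))
              + (M.choose (i + 1) : ℝ) * (poch x (i + 1) * poch y (M - i)) := by
        intro i hi
        rw [Nat.choose_succ_succ]
        push_cast
        ring
      rw [Finset.sum_congr rfl hsplit, Finset.sum_add_distrib]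
      have h0 : ((M + 1).choose 0 : ℝ) * (poch x 0 * poch y (M + 1 - 0)) = poch y (M + 1) := by
        simp [poch_zero]
      rw [h0]
      have hAeq : A = (∑ i ∈ Finset.range (M + 1),
            (M.choose (i + 1) : ℝ) * (poch x (i + 1) * poch y (M - i))) + poch y (M + 1) := by
        rw [hAdef, Finset.sum_range_succ' _ M]
        congr 1
        · rw [Finset.sum_range_succ]
          simp only [Nat.choose_succ_self, Nat.cast_zero, zero_mul, add_zero]
          refine Finset.sum_congr rfl fun i hi => ?_
          rw [show M + 1 - (i + 1) = M - i from by omega]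
        · simp [poch_zero]
      rw [hAeq]
      ring
    rw [hA, poch_succ, ih]
    have hAB : B + A = (∑ i ∈ Finset.range (M + 1),
        (M.choose i : ℝ) * (poch x i * poch y (M - i))) * (x + y + M) := by
      rw [hAdef, hBdef, Finset.sum_mul, ← Finset.sum_add_distrib]
      refine Finset.sum_congr rfl fun i hi => ?_
      have hiM : i ≤ M := Nat.lt_succ_iff.mp (Finset.mem_range.mp hi)
      have e1 : poch y (M + 1 - i) = poch y (M - i) * (y + (M - i : ℕ)) := by
        rw [show M + 1 - i = (M - i) + 1 from by omega, poch_succ]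
      have e2 : ((M - i : ℕ) : ℝ) = (M : ℝ) - i := by
        push_cast [Nat.cast_sub hiM]; ring
      rw [poch_succ, e1, e2]
      ring
    rw [hAB]

lemma poch_vandermonde_div (x y : ℝ) (M : ℕ) :
    ∑ i ∈ Finset.range (M + 1),
        poch x i * poch y (M - i) / ((i.factorial : ℝ) * ((M - i).factorial : ℝ))
      = poch (x + y) M / (M.factorial : ℝ) := by
  rw [poch_vandermonde, Finset.sum_div]
  refine Finset.sum_congr rfl fun i hi => ?_
  have hiM : i ≤ M := Nat.lt_succ_iff.mp (Finset.mem_range.mp hi)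
  have hc : ((M.choose i : ℕ) : ℝ) * (i.factorial : ℝ) * ((M - i).factorial : ℝ)
      = (M.factorial : ℝ) := by
    exact_mod_cast congrArg (Nat.cast : ℕ → ℝ) (Nat.choose_mul_factorial_mul_factorial hiM)
  have h1 : (i.factorial : ℝ) ≠ 0 := Nat.cast_ne_zero.mpr (Nat.factorial_ne_zero _)
  have h2 : ((M - i).factorial : ℝ) ≠ 0 := Nat.cast_ne_zero.mpr (Nat.factorial_ne_zero _)
  have h3 : (M.factorial : ℝ) ≠ 0 := Nat.cast_ne_zero.mpr (Nat.factorial_ne_zero _)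
  rw [div_eq_div_iff (by positivity) h3]
  linear_combination (-(poch x i * poch y (M - i))) * hc

/-- The Racah-type rational function admits the dual Hahn expansion
`𝒰_m(n; α, β, ζ, N) = [n!/(α−β−n)_n] Σ_{k=0}^{n} (−α)_k (2α−β−n)_{n−k} / ((n−k)! k!) ·
  R^{dH}_k(m; N−2α−β−2ζ−1, 2α−β−N−1, N)`. -/
theorem racahRat_dualHahn_expansion (N : ℕ) (hN : 1 ≤ N) (α β ζ : ℝ)
    (h1 : ∀ z : ℤ, α - β ≠ (z : ℝ))
    (h2 : ∀ z : ℤ, 2 * α + β + 2 * ζ ≠ (z : ℝ)) :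
    ∀ m n : ℕ, m ≤ N → n ≤ N →
      racahRat α β ζ N m n
        = ((Nat.factorial n : ℝ) / poch (α - β - (n : ℝ)) n)
          * ∑ k ∈ Finset.range (n + 1),
              poch (-α) k * poch (2 * α - β - (n : ℝ)) (n - k)
                / ((Nat.factorial (n - k) : ℝ) * (Nat.factorial k : ℝ))
                * dualHahn ((N : ℝ) - 2 * α - β - 2 * ζ - 1) (2 * α - β - (N : ℝ) - 1)
                    N k m := by
  intro m n hm hn
  have hfac : ∀ r : ℕ, (r.factorial : ℝ) ≠ 0 :=
    fun r => Nat.cast_ne_zero.mpr (Nat.factorial_ne_zero _)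
  have hQ1 : ∀ j : ℕ, poch (α - β - (n : ℝ)) j ≠ 0 := by
    intro j
    apply poch_ne_zero
    intro i _ h0
    exact h1 ((n : ℤ) - i) (by push_cast; linarith)
  have hQ2 : ∀ j : ℕ, poch (α - β - (n : ℝ) + (j : ℝ)) (n - j) ≠ 0 := by
    intro j
    apply poch_ne_zero
    intro i _ h0
    exact h1 ((n : ℤ) - j - i) (by push_cast; linarith)
  have hE : ∀ j : ℕ, poch ((N : ℝ) - 2 * α - β - 2 * ζ) j ≠ 0 := by
    intro j
    apply poch_ne_zero
    intro i _ h0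
    exact h2 ((N : ℤ) + i) (by push_cast; linarith)
  have hNN : ∀ j : ℕ, j ≤ N → poch (-(N : ℝ)) j ≠ 0 := by
    intro j hj
    apply poch_ne_zero
    intro i hi h0
    have : (i : ℝ) < (N : ℝ) := by exact_mod_cast lt_of_lt_of_le hi hj
    linarith
  -- abbreviation for the common summand
  set G : ℕ → ℝ := fun j =>
    poch (-(m : ℝ)) j * poch (-(n : ℝ)) j * poch (-α) j
      * poch ((m : ℝ) - 2 * β - 2 * ζ - 1) j
      / (poch (-(N : ℝ)) j * poch (α - β - (n : ℝ)) j
          * poch ((N : ℝ) - 2 * α - β - 2 * ζ) j * (Nat.factorial j : ℝ)) with hGdef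
  have hL : racahRat α β ζ N m n = ∑ j ∈ Finset.range (n + 1), G j := by
    unfold racahRat
    apply Finset.sum_subset (Finset.range_subset_range.mpr (by omega))
    intro j hj1 hj2
    simp only [Finset.mem_range] at hj1 hj2
    rw [poch_nat_eq_zero (show m < j by omega)]
    simp
  rw [hL]
  -- clean up the dual Hahn function and extend its sum
  have hdH : ∀ k ∈ Finset.range (n + 1),
      dualHahn ((N : ℝ) - 2 * α - β - 2 * ζ - 1) (2 * α - β - (N : ℝ) - 1) N k m
        = ∑ j ∈ Finset.range (n + 1),
            poch (-(k : ℝ)) j * poch (-(m : ℝ)) j * poch ((m : ℝ) - 2 * β - 2 * ζ - 1) j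
              / (poch ((N : ℝ) - 2 * α - β - 2 * ζ) j * poch (-(N : ℝ)) j
                  * (Nat.factorial j : ℝ)) := by
    intro k hk
    simp only [Finset.mem_range] at hk
    unfold dualHahn
    rw [show (m : ℝ) + ((N : ℝ) - 2 * α - β - 2 * ζ - 1) + (2 * α - β - (N : ℝ) - 1) + 1
        = (m : ℝ) - 2 * β - 2 * ζ - 1 from by ring,
      show ((N : ℝ) - 2 * α - β - 2 * ζ - 1) + 1 = (N : ℝ) - 2 * α - β - 2 * ζ from by ring]
    apply Finset.sum_subset (Finset.range_subset_range.mpr (by omega))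
    intro j hj1 hj2
    simp only [Finset.mem_range] at hj1 hj2
    rw [poch_nat_eq_zero (show k < j by omega)]
    simp
  -- the key per-j identity
  have key : ∀ j ∈ Finset.range (n + 1),
      ((Nat.factorial n : ℝ) / poch (α - β - (n : ℝ)) n)
        * (∑ k ∈ Finset.range (n + 1),
            poch (-α) k * poch (2 * α - β - (n : ℝ)) (n - k)
              / ((Nat.factorial (n - k) : ℝ) * (Nat.factorial k : ℝ))
            * (poch (-(k : ℝ)) j * poch (-(m : ℝ)) j * poch ((m : ℝ) - 2 * β - 2 * ζ - 1) j
                / (poch ((N : ℝ) - 2 * α - β - 2 * ζ) j * poch (-(N : ℝ)) j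
                    * (Nat.factorial j : ℝ))))
        = G j := by
    intro j hj
    have hjn : j ≤ n := Nat.lt_succ_iff.mp (Finset.mem_range.mp hj)
    set W : ℝ := poch (-(m : ℝ)) j * poch ((m : ℝ) - 2 * β - 2 * ζ - 1) j
        / (poch ((N : ℝ) - 2 * α - β - 2 * ζ) j * poch (-(N : ℝ)) j
            * (Nat.factorial j : ℝ)) with hWdef
    set F : ℕ → ℝ := fun k =>
      poch (-α) k * poch (2 * α - β - (n : ℝ)) (n - k)
        / ((Nat.factorial (n - k) : ℝ) * (Nat.factorial k : ℝ))
      * (poch (-(k : ℝ)) j * poch (-(m : ℝ)) j * poch ((m : ℝ) - 2 * β - 2 * ζ - 1) j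
          / (poch ((N : ℝ) - 2 * α - β - 2 * ζ) j * poch (-(N : ℝ)) j
              * (Nat.factorial j : ℝ))) with hFdef
    have s1 : ∑ k ∈ Finset.range (n + 1), F k = ∑ k ∈ Finset.Ico j (n + 1), F k := by
      symm
      apply Finset.sum_subset
      · intro k hk
        simp only [Finset.mem_Ico] at hk
        exact Finset.mem_range.mpr hk.2
      · intro k hk1 hk2
        simp only [Finset.mem_range] at hk1
        simp only [Finset.mem_Ico, not_and, not_le] at hk2
        have hkj : k < j := by omega
        simp only [hFdef, poch_nat_eq_zero hkj]
        simp
    have s2 : ∑ k ∈ Finset.Ico j (n + 1), F k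
        = ∑ i ∈ Finset.range ((n - j) + 1), F (j + i) := by
      rw [Finset.sum_Ico_eq_sum_range, show n + 1 - j = n - j + 1 from by omega]
    have s3 : ∀ i ∈ Finset.range ((n - j) + 1),
        F (j + i)
          = ((-1) ^ j * poch (-α) j * W)
            * (poch (-α + (j : ℝ)) i * poch (2 * α - β - (n : ℝ)) ((n - j) - i)
                / ((i.factorial : ℝ) * (((n - j) - i).factorial : ℝ))) := by
      intro i hi
      have hji : j ≤ j + i := Nat.le_add_right _ _
      have hpn : poch (-((j + i : ℕ) : ℝ)) j
          = (-1) ^ j * (((j + i).factorial : ℝ)) / ((i.factorial : ℝ)) := by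
        rw [poch_nat_eq hji, show j + i - j = i from by omega]
      have hc1 : (-(((j : ℕ) : ℝ) + (i : ℝ))) = -(((j + i : ℕ) : ℝ)) := by push_cast; ring
      rw [hFdef]
      simp only
      have hsub : n - (j + i) = (n - j) - i := by omega
      have hfji : (((j + i).factorial : ℝ)) ≠ 0 := hfac _
      rw [hsub, poch_add (-α) j i]
      push_cast
      rw [hc1, hpn, hWdef]
      have hK : ((j + i).factorial : ℝ) * (((j + i).factorial : ℝ))⁻¹ = 1 :=
        mul_inv_cancel₀ hfji
      simp only [div_eq_mul_inv, mul_inv]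
      linear_combination (poch (-α) j * poch (-α + (j : ℝ)) i
        * poch (2 * α - β - (n : ℝ)) (n - j - i)
        * (((n - j - i).factorial : ℝ))⁻¹ * ((i.factorial : ℝ))⁻¹ * poch (-(m : ℝ)) j
        * poch ((m : ℝ) - 2 * β - 2 * ζ - 1) j * (poch ((N : ℝ) - 2 * α - β - 2 * ζ) j)⁻¹
        * (poch (-(N : ℝ)) j)⁻¹ * ((j.factorial : ℝ))⁻¹ * (-1) ^ j) * hK
    rw [s1, s2, Finset.sum_congr rfl s3, ← Finset.mul_sum, poch_vandermonde_div]
    rw [show -α + (j : ℝ) + (2 * α - β - (n : ℝ)) = α - β - (n : ℝ) + (j : ℝ) from by ring]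
    -- final algebra
    have hsplitn : poch (α - β - (n : ℝ)) n
        = poch (α - β - (n : ℝ)) j * poch (α - β - (n : ℝ) + (j : ℝ)) (n - j) := by
      rw [show n = j + (n - j) from by omega, poch_add]
      rw [show j + (n - j) - j = n - j from by omega]
    have hpn2 : poch (-(n : ℝ)) j
        = (-1) ^ j * ((n.factorial : ℝ)) / (((n - j).factorial : ℝ)) := poch_nat_eq hjn
    rw [hGdef]
    simp only
    rw [hWdef, hsplitn, hpn2]
    have h4 := hQ1 j
    have h5 := hQ2 j
    have h6 := hE j
    have h7 := hNN j (le_trans hjn hn)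
    field_simp
  -- assemble
  calc ∑ j ∈ Finset.range (n + 1), G j
      = ∑ j ∈ Finset.range (n + 1),
          ((Nat.factorial n : ℝ) / poch (α - β - (n : ℝ)) n)
            * (∑ k ∈ Finset.range (n + 1),
                poch (-α) k * poch (2 * α - β - (n : ℝ)) (n - k)
                  / ((Nat.factorial (n - k) : ℝ) * (Nat.factorial k : ℝ))
                * (poch (-(k : ℝ)) j * poch (-(m : ℝ)) j
                    * poch ((m : ℝ) - 2 * β - 2 * ζ - 1) j
                    / (poch ((N : ℝ) - 2 * α - β - 2 * ζ) j * poch (-(N : ℝ)) j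
                        * (Nat.factorial j : ℝ)))) := (Finset.sum_congr rfl key).symm
    _ = ((Nat.factorial n : ℝ) / poch (α - β - (n : ℝ)) n)
          * ∑ j ∈ Finset.range (n + 1), ∑ k ∈ Finset.range (n + 1),
              poch (-α) k * poch (2 * α - β - (n : ℝ)) (n - k)
                / ((Nat.factorial (n - k) : ℝ) * (Nat.factorial k : ℝ))
              * (poch (-(k : ℝ)) j * poch (-(m : ℝ)) j
                  * poch ((m : ℝ) - 2 * β - 2 * ζ - 1) j
                  / (poch ((N : ℝ) - 2 * α - β - 2 * ζ) j * poch (-(N : ℝ)) j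
                      * (Nat.factorial j : ℝ))) := by rw [Finset.mul_sum]
    _ = ((Nat.factorial n : ℝ) / poch (α - β - (n : ℝ)) n)
          * ∑ k ∈ Finset.range (n + 1), ∑ j ∈ Finset.range (n + 1),
              poch (-α) k * poch (2 * α - β - (n : ℝ)) (n - k)
                / ((Nat.factorial (n - k) : ℝ) * (Nat.factorial k : ℝ))
              * (poch (-(k : ℝ)) j * poch (-(m : ℝ)) j
                  * poch ((m : ℝ) - 2 * β - 2 * ζ - 1) j
                  / (poch ((N : ℝ) - 2 * α - β - 2 * ζ) j * poch (-(N : ℝ)) j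
                      * (Nat.factorial j : ℝ))) := by rw [Finset.sum_comm]
    _ = ((Nat.factorial n : ℝ) / poch (α - β - (n : ℝ)) n)
          * ∑ k ∈ Finset.range (n + 1),
              poch (-α) k * poch (2 * α - β - (n : ℝ)) (n - k)
                / ((Nat.factorial (n - k) : ℝ) * (Nat.factorial k : ℝ))
                * dualHahn ((N : ℝ) - 2 * α - β - 2 * ζ - 1) (2 * α - β - (N : ℝ) - 1)
                    N k m := by
        congr 1
        refine Finset.sum_congr rfl fun k hk => ?_
        rw [hdH k hk, Finset.mul_sum]
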